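/- Let Θ = EuclideanSpace ℝ (Fin m) and V = EuclideanSpace ℝ (Fin n). Let E : Θ → V → ℝ be C³ on Θ × V, C : V → ℝ be C², and v⋆ : Θ → ℝ → V be C³ on Θ × ℝ, satisfying for all θ, β the equilibrium condition gradient (fun w => E θ w + β·C w) (v⋆ θ β) = 0. Let L θ = C (v⋆ θ 0), let ω > 0, T = 2π/ω, and for γ ∈ ℝ define b(γ) = (2/T)·∫₀ᵀ sin(ωt) • v⋆ θ (γ·sin(ωt)) dt ∈ V. Then for every fixed θ ∈ Θ and every direction h ∈ Θ, the function γ ↦ γ·(fderiv ℝ L θ h) − ⟪b(γ), fderiv ℝ (fun θ' => gradient (E θ') (v⋆ θ 0)) θ h⟫ is big-O of γ³ as γ → 0. -/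

import Mathlib

/-!
Write `G(θ, w) = ∇_w E(θ, w)`. The equilibrium condition says `G(θ, v⋆ θ β) = -β ∇C(v⋆ θ β)`.
Differentiating it in `β` at `β = 0` gives `∂_w G · ∂_β v⋆ = -∇C`, and differentiating it in `θ`
gives `∂_θ G · h = -∂_w G · ∂_θ v⋆ h`. Since `∂_w G` is the Hessian of `E θ`, it is self-adjoint,
and combining the two identities yields `dL(θ) h = ⟪∂_β v⋆ θ 0, ∂_θ G · h⟫`.

On the other hand `b(γ)` is the first sine Fourier coefficient of `t ↦ v⋆ θ (γ sin ωt)`.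
Expanding `v⋆ θ` to second order at `0`, the constant and quadratic terms are killed by
`∫ sin = ∫ sin³ = 0` over a period and the Taylor remainder is `O(γ³)` uniformly in `t`, so
`b(γ) = γ ∂_β v⋆ θ 0 + O(γ³)`.
-/

open MeasureTheory Set Filter Topology Asymptotics Real InnerProductSpace
open scoped RealInnerProductSpace

section Asymptotic

variable {F : Type*} [NormedAddCommGroup F] [NormedSpace ℝ F]

theorem Asymptotics.isBigO_smul_const_self {α : Type*} {l : Filter α} (k : α → ℝ) (d : F) :
    (fun x ↦ k x • d) =O[l] k :=
  .of_bound ‖d‖ (.of_forall fun x ↦ by rw [norm_smul, mul_comm])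

theorem taylor_isBigO_univ {f : ℝ → F} {x₀ : ℝ} {n : ℕ} (hf : ContDiff ℝ (n + 1) f) :
    (fun x ↦ f x - taylorWithinEval f n univ x₀ x) =O[𝓝 x₀] fun x ↦ (x - x₀) ^ (n + 1) := by
  have hlo := (taylor_isLittleO_univ (x₀ := x₀) (by exact_mod_cast hf)).isBigO
  have hterm := (isBigO_smul_const_self (l := 𝓝 x₀)
    (fun x ↦ ((n + 1 : ℝ) * n.factorial)⁻¹ * (x - x₀) ^ (n + 1))
    (iteratedDerivWithin (n + 1) f univ x₀)).trans ((isBigO_refl _ _).const_mul_left _)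
  refine (hlo.add hterm).congr_left fun x ↦ ?_
  rw [taylorWithinEval_succ]
  abel

theorem taylorWithinEval_two_univ_zero (f : ℝ → F) (x : ℝ) :
    taylorWithinEval f 2 univ 0 x = f 0 + x • deriv f 0 + (x ^ 2 / 2) • iteratedDeriv 2 f 0 := by
  simp [taylor_within_apply, iteratedDerivWithin_univ, div_eq_inv_mul, one_add_one_eq_two]

theorem isBigO_integral_smul_comp_mul {R : ℝ → F} {k : ℕ} (hR : R =O[𝓝 0] (· ^ k))
    {u : ℝ → ℝ} (hu : ∀ t, |u t| ≤ 1) (a b : ℝ) :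
    (fun γ ↦ ∫ t in a..b, u t • R (γ * u t)) =O[𝓝 0] (· ^ k) := by
  obtain ⟨c, hc, hRc⟩ := hR.exists_nonneg
  obtain ⟨δ, hδ, hRδ⟩ := Metric.eventually_nhds_iff_ball.1 hRc.bound
  refine .of_bound (c * |b - a|) ?_
  filter_upwards [Metric.ball_mem_nhds 0 hδ] with γ hγ
  rw [mul_right_comm]
  refine intervalIntegral.norm_integral_le_of_norm_le_const fun t _ ↦ ?_
  have hγu : |γ * u t| ≤ |γ| := by
    rw [abs_mul]; exact mul_le_of_le_one_right (abs_nonneg γ) (hu t)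
  have hmem : γ * u t ∈ Metric.ball (0 : ℝ) δ := by
    rw [mem_ball_zero_iff, Real.norm_eq_abs] at hγ ⊢; exact hγu.trans_lt hγ
  calc ‖u t • R (γ * u t)‖ ≤ 1 * (c * ‖(γ * u t) ^ k‖) := by
        rw [norm_smul, Real.norm_eq_abs]
        exact mul_le_mul (hu t) (hRδ _ hmem) (norm_nonneg _) zero_le_one
    _ ≤ c * ‖γ ^ k‖ := by
        rw [one_mul, norm_pow, norm_pow, Real.norm_eq_abs, Real.norm_eq_abs]
        gcongr

end Asymptotic

theorem integral_sin_mul_pow_period {ω : ℝ} (hω : ω ≠ 0) (k : ℕ) :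
    ∫ t in (0 : ℝ)..2 * π / ω, sin (ω * t) ^ k = ω⁻¹ * ∫ x in (0 : ℝ)..2 * π, sin x ^ k := by
  rw [intervalIntegral.integral_comp_mul_left (fun x ↦ sin x ^ k) hω, mul_zero,
    mul_div_cancel₀ _ hω, smul_eq_mul]

theorem integral_sin_mul_period {ω : ℝ} (hω : ω ≠ 0) :
    ∫ t in (0 : ℝ)..2 * π / ω, sin (ω * t) = 0 := by
  simpa using integral_sin_mul_pow_period hω 1

theorem integral_sin_mul_sq_period {ω : ℝ} (hω : ω ≠ 0) :
    ∫ t in (0 : ℝ)..2 * π / ω, sin (ω * t) ^ 2 = π / ω := by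
  rw [integral_sin_mul_pow_period hω, integral_sin_sq, sin_zero, sin_two_pi]
  ring

theorem integral_sin_mul_pow_three_period {ω : ℝ} (hω : ω ≠ 0) :
    ∫ t in (0 : ℝ)..2 * π / ω, sin (ω * t) ^ 3 = 0 := by
  rw [integral_sin_mul_pow_period hω, integral_sin_pow]
  simp

section SineCoefficient

variable {F : Type*} [NormedAddCommGroup F] [NormedSpace ℝ F] [CompleteSpace F]

theorem integral_sin_mul_smul_quadratic_period {ω : ℝ} (hω : ω ≠ 0) (γ : ℝ) (c₀ c₁ c₂ : F) :
    ∫ t in (0 : ℝ)..2 * π / ω, sin (ω * t) • (c₀ + (γ * sin (ω * t)) • c₁ +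
      ((γ * sin (ω * t)) ^ 2 / 2) • c₂) = (γ * (π / ω)) • c₁ := by
  have hsplit : (fun t ↦ sin (ω * t) • (c₀ + (γ * sin (ω * t)) • c₁ +
      ((γ * sin (ω * t)) ^ 2 / 2) • c₂)) = fun t ↦ sin (ω * t) • c₀ +
        (γ * sin (ω * t) ^ 2) • c₁ + (γ ^ 2 / 2 * sin (ω * t) ^ 3) • c₂ := by
    funext t; module
  have hint : ∀ f : ℝ → ℝ, Continuous f → ∀ c : F,
      IntervalIntegrable (fun t ↦ f t • c) volume 0 (2 * π / ω) :=
    fun f hf c ↦ (hf.smul continuous_const).intervalIntegrable _ _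
  rw [hsplit, intervalIntegral.integral_add
    ((hint _ (by fun_prop) c₀).add (hint _ (by fun_prop) c₁)) (hint _ (by fun_prop) c₂),
    intervalIntegral.integral_add (hint _ (by fun_prop) c₀) (hint _ (by fun_prop) c₁)]
  simp only [intervalIntegral.integral_smul_const, intervalIntegral.integral_const_mul,
    integral_sin_mul_period hω, integral_sin_mul_sq_period hω,
    integral_sin_mul_pow_three_period hω]
  simp

theorem isBigO_integral_sin_smul_comp_sub_deriv {g : ℝ → F} (hg : ContDiff ℝ 3 g) {ω : ℝ}
    (hω : ω ≠ 0) :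
    (fun γ ↦ (2 / (2 * π / ω)) • (∫ t in (0 : ℝ)..2 * π / ω, sin (ω * t) • g (γ * sin (ω * t)))
      - γ • deriv g 0) =O[𝓝 0] (· ^ 3) := by
  set P : ℝ → F := fun x ↦ g 0 + x • deriv g 0 + (x ^ 2 / 2) • iteratedDeriv 2 g 0
  have hR : (fun x ↦ g x - P x) =O[𝓝 0] (· ^ 3) := by
    have h := taylor_isBigO_univ (n := 2) (x₀ := 0) hg
    simp only [taylorWithinEval_two_univ_zero, sub_zero] at h
    exact h
  refine ((isBigO_integral_smul_comp_mul hR (u := fun t ↦ sin (ω * t))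
    (fun t ↦ abs_sin_le_one _) 0 (2 * π / ω)).const_smul_left (2 / (2 * π / ω))).congr_left
    fun γ ↦ ?_
  have hsplit : ∀ t, sin (ω * t) • g (γ * sin (ω * t)) =
      sin (ω * t) • (g (γ * sin (ω * t)) - P (γ * sin (ω * t))) +
        sin (ω * t) • P (γ * sin (ω * t)) := fun t ↦ by
    rw [← smul_add, sub_add_cancel]
  have hcont : Continuous g := hg.continuous
  rw [Pi.smul_apply, intervalIntegral.integral_congr fun t _ ↦ hsplit t,
    intervalIntegral.integral_add (Continuous.intervalIntegrable (by fun_prop) _ _)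
      (Continuous.intervalIntegrable (by fun_prop) _ _),
    integral_sin_mul_smul_quadratic_period hω, smul_add, smul_smul,
    show 2 / (2 * π / ω) * (γ * (π / ω)) = γ by field_simp, add_sub_cancel_right]

end SineCoefficient

section Equilibrium

variable {Θ V : Type*} [NormedAddCommGroup Θ] [NormedSpace ℝ Θ]
  [NormedAddCommGroup V] [InnerProductSpace ℝ V] [CompleteSpace V]

theorem gradient_add_const_mul {f g : V → ℝ} {x : V} (hf : DifferentiableAt ℝ f x)
    (hg : DifferentiableAt ℝ g x) (β : ℝ) :
    gradient (fun w ↦ f w + β * g w) x = gradient f x + β • gradient g x := by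
  simp only [gradient, fderiv_fun_add hf (hg.const_mul β), fderiv_const_mul hg, map_add,
    map_smul]

theorem contDiff_gradient {f : V → ℝ} {m n : WithTop ℕ∞} (hf : ContDiff ℝ n f)
    (hmn : m + 1 ≤ n) : ContDiff ℝ m (gradient f) :=
  (toDual ℝ V).symm.contDiff.comp (hf.fderiv_right hmn)

theorem contDiff_gradient_right {E : Θ → V → ℝ} {m n : WithTop ℕ∞}
    (hE : ContDiff ℝ n (fun p : Θ × V ↦ E p.1 p.2)) (hmn : m + 1 ≤ n) :
    ContDiff ℝ m (fun p : Θ × V ↦ gradient (E p.1) p.2) := by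
  have hdiff := hE.differentiable (by rintro rfl; simp at hmn)
  have hgrad : ∀ p : Θ × V, gradient (E p.1) p.2 = (toDual ℝ V).symm
      ((fderiv ℝ (fun q : Θ × V ↦ E q.1 q.2) p).comp (ContinuousLinearMap.inr ℝ Θ V)) := by
    intro p
    rw [gradient, ← ((hdiff p).hasFDerivAt.comp p.2 (hasFDerivAt_prodMk_right p.1 p.2)).fderiv]
    rfl
  simp only [hgrad]
  exact (toDual ℝ V).symm.contDiff.comp ((hE.fderiv_right hmn).clm_comp contDiff_const)

theorem inner_fderiv_gradient_comm {f : V → ℝ} {x : V} (hf : ContDiffAt ℝ 2 f x) (u w : V) :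
    ⟪fderiv ℝ (gradient f) x u, w⟫ = ⟪u, fderiv ℝ (gradient f) x w⟫ := by
  have hhess : ∀ u w, ⟪fderiv ℝ (gradient f) x u, w⟫ = fderiv ℝ (fderiv ℝ f) x u w := by
    intro u w
    rw [show gradient f = (toDual ℝ V).symm ∘ fderiv ℝ f from rfl,
      LinearIsometryEquiv.comp_fderiv]
    exact toDual_symm_apply
  rw [hhess, real_inner_comm, hhess]
  exact hf.isSymmSndFDerivAt (by simp) u w

theorem fderiv_cost_equilibrium_eq_inner {E : Θ → V → ℝ}
    (hE : ContDiff ℝ 2 (fun p : Θ × V ↦ E p.1 p.2)) {C : V → ℝ} (hC : ContDiff ℝ 2 C)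
    {v : Θ → ℝ → V} (heq : ∀ θ β, gradient (fun w ↦ E θ w + β * C w) (v θ β) = 0) {θ : Θ}
    (hvθ : DifferentiableAt ℝ (fun θ' ↦ v θ' 0) θ) (hvβ : DifferentiableAt ℝ (v θ) 0) (h : Θ) :
    fderiv ℝ (fun θ' ↦ C (v θ' 0)) θ h =
      ⟪deriv (v θ) 0, fderiv ℝ (fun θ' ↦ gradient (E θ') (v θ 0)) θ h⟫ := by
  set G : Θ × V → V := fun p ↦ gradient (E p.1) p.2
  have hG : Differentiable ℝ G :=
    (contDiff_gradient_right hE (m := 1) (by norm_num)).differentiable one_ne_zero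
  have hEθ : ∀ θ', ContDiff ℝ 2 (E θ') := fun θ' ↦ hE.comp (contDiff_const.prodMk contDiff_id)
  have hCd : Differentiable ℝ C := hC.differentiable two_ne_zero
  have hbalance : ∀ θ' β, G (θ', v θ' β) = -(β • gradient C (v θ' β)) := fun θ' β ↦
    eq_neg_of_add_eq_zero_left <| by
      rw [← gradient_add_const_mul ((hEθ θ').differentiable two_ne_zero _) (hCd _)]
      exact heq θ' β
  set v₀ := v θ 0
  set DG := fderiv ℝ G (θ, v₀)
  set Dv := fderiv ℝ (fun θ' ↦ v θ' 0) θ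
  have hβ : DG (0, deriv (v θ) 0) = -gradient C v₀ := by
    have hlhs := (hG _).hasFDerivAt.comp_hasDerivAt (0 : ℝ)
      ((hasDerivAt_const (0 : ℝ) θ).prodMk hvβ.hasDerivAt)
    have hrhs := ((hasDerivAt_id (0 : ℝ)).smul
      (((contDiff_gradient hC (m := 1) (by norm_num)).differentiable one_ne_zero
        v₀).hasFDerivAt.comp_hasDerivAt (0 : ℝ) hvβ.hasDerivAt)).neg
    simp only [Function.comp_def, hbalance] at hlhs
    simpa using hlhs.unique hrhs
  have hθ : ∀ k, DG (k, Dv k) = 0 := by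
    have hlhs := (hG _).hasFDerivAt.comp θ ((hasFDerivAt_id θ).prodMk hvθ.hasFDerivAt)
    simp only [Function.comp_def, id, hbalance, zero_smul, neg_zero] at hlhs
    intro k
    simpa using congr($(hlhs.unique (hasFDerivAt_const (0 : V) θ)) k)
  have hA : fderiv ℝ (fun θ' ↦ gradient (E θ') v₀) θ h = DG (h, 0) :=
    congr($(((hG _).hasFDerivAt.comp θ (hasFDerivAt_prodMk_left θ v₀)).fderiv) h)
  have hHess : ∀ w, fderiv ℝ (gradient (E θ)) v₀ w = DG (0, w) := fun w ↦
    congr($(((hG _).hasFDerivAt.comp v₀ (hasFDerivAt_prodMk_right θ v₀)).fderiv) w)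
  have hL : fderiv ℝ (fun θ' ↦ C (v θ' 0)) θ h = ⟪gradient C v₀, Dv h⟫ := by
    rw [inner_gradient_left]
    exact congr($(((hCd _).hasFDerivAt.comp θ hvθ.hasFDerivAt).fderiv) h)
  have hsplit : DG (h, 0) = -DG (0, Dv h) := by
    rw [eq_neg_iff_add_eq_zero, ← map_add, Prod.mk_add_mk, add_zero, zero_add, hθ]
  have hsymm := inner_fderiv_gradient_comm ((hEθ θ).contDiffAt (x := v₀)) (deriv (v θ) 0) (Dv h)
  rw [hHess, hHess] at hsymm
  rw [hL, hA, hsplit, inner_neg_right, ← hsymm, hβ, inner_neg_left, neg_neg]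

end Equilibrium

/-- with `E` C³, `C` C², `v⋆` C³ jointly, equilibrium condition
`∇_w (E θ w + β·C w) |_{w = v⋆ θ β} = 0`, loss `L θ = C (v⋆ θ 0)`, `ω > 0`, `T = 2π/ω` and
`b(γ) = (2/T)·∫₀ᵀ sin(ωt) • v⋆ θ (γ sin(ωt)) dt`, for fixed `θ` and direction `h`:
`γ·(∂L/∂θ · h) − ⟪b(γ), ∂/∂θ [∇_w E(θ', ·) at v⋆ θ 0] · h⟫ = O(γ³)` as `γ → 0`. -/
theorem stmt12 {m n : ℕ}
    (E : EuclideanSpace ℝ (Fin m) → EuclideanSpace ℝ (Fin n) → ℝ)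
    (hE : ContDiff ℝ 3
      (fun p : EuclideanSpace ℝ (Fin m) × EuclideanSpace ℝ (Fin n) => E p.1 p.2))
    (C : EuclideanSpace ℝ (Fin n) → ℝ) (hC : ContDiff ℝ 2 C)
    (v : EuclideanSpace ℝ (Fin m) → ℝ → EuclideanSpace ℝ (Fin n))
    (hv : ContDiff ℝ 3 (fun p : EuclideanSpace ℝ (Fin m) × ℝ => v p.1 p.2))
    (heq : ∀ (θ : EuclideanSpace ℝ (Fin m)) (β : ℝ),
      gradient (fun w => E θ w + β * C w) (v θ β) = 0)
    (L : EuclideanSpace ℝ (Fin m) → ℝ) (hL : ∀ θ, L θ = C (v θ 0))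
    (ω T : ℝ) (hω : 0 < ω) (hT : T = 2 * Real.pi / ω)
    (θ : EuclideanSpace ℝ (Fin m))
    (b : ℝ → EuclideanSpace ℝ (Fin n))
    (hb : ∀ γ : ℝ,
      b γ = (2 / T) • ∫ t in (0 : ℝ)..T, Real.sin (ω * t) • v θ (γ * Real.sin (ω * t)))
    (h : EuclideanSpace ℝ (Fin m)) :
    Asymptotics.IsBigO (nhds (0 : ℝ))
      (fun γ : ℝ =>
        γ * fderiv ℝ L θ h -
          ⟪b γ, fderiv ℝ (fun θ' => gradient (E θ') (v θ 0)) θ h⟫)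
      (fun γ : ℝ => γ ^ 3) := by
  obtain rfl : L = fun θ' ↦ C (v θ' 0) := funext hL
  subst hT
  have hvβ : ContDiff ℝ 3 (v θ) := hv.comp (contDiff_const.prodMk contDiff_id)
  have hvθ : DifferentiableAt ℝ (fun θ' ↦ v θ' 0) θ :=
    (hv.comp (contDiff_id.prodMk contDiff_const)).differentiable (by norm_num) θ
  have hkey := fderiv_cost_equilibrium_eq_inner (hE.of_le (by norm_num)) hC heq hvθ
    (hvβ.differentiable (by norm_num) 0) h
  set A := fderiv ℝ (fun θ' ↦ gradient (E θ') (v θ 0)) θ h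
  have hb_sub : (fun γ ↦ b γ - γ • deriv (v θ) 0) =O[𝓝 0] (· ^ 3) :=
    (isBigO_integral_sin_smul_comp_sub_deriv hvβ hω.ne').congr_left fun γ ↦ by rw [hb]
  refine (((innerSL ℝ A).isBigO_comp _ _).trans hb_sub).neg_left.congr_left fun γ ↦ ?_
  rw [hkey, innerSL_apply_apply, inner_sub_right, inner_smul_right, real_inner_comm A (b γ),
    real_inner_comm (deriv (v θ) 0) A]
  ring
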